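/- If the underlying first-order language has infinitely many function symbols, then for every finite definite program P and every query Q, M_P ⊨ Q if and only if P ⊨ Q. -/

import Mathlib

/-- First-order terms over function symbols `F` (each use records the number of
arguments), with variables indexed by `ℕ`. -/
inductive Tm (F : Type) : Type
  | var : ℕ → Tm F
  | app : F → (k : ℕ) → (Fin k → Tm F) → Tm F

namespace Tm

/-- Apply a substitution to a term. -/
def subst (σ : ℕ → Tm F) : Tm F → Tm F
  | var n => σ n
  | app f k ts => app f k (fun i => (ts i).subst σ)

/-- Variables occurring in a term. -/
def vars : Tm F → Set ℕ
  | var n => {n}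
  | app _ _ ts => ⋃ i, (ts i).vars

/-- Function symbols occurring in a term. -/
def symbols : Tm F → Set F
  | var _ => ∅
  | app f _ ts => {f} ∪ ⋃ i, (ts i).symbols

/-- Subterms of a term (including the term itself). -/
def subterms : Tm F → Set (Tm F)
  | var n => {var n}
  | app f k ts => {app f k ts} ∪ ⋃ i, (ts i).subterms

/-- The head (outermost) function symbol, if any. -/
def head? : Tm F → Option F
  | var _ => none
  | app f _ _ => some f

def IsVar : Tm F → Prop
  | var _ => True
  | app _ _ _ => False

def isGround (t : Tm F) : Prop := t.vars = ∅

/-- Well-formedness w.r.t. an arity assignment: every function symbol is used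
with exactly its arity. -/
def WF (ar : F → ℕ) : Tm F → Prop
  | var _ => True
  | app f k ts => k = ar f ∧ ∀ i, (ts i).WF ar

end Tm

/-- A term is an alien w.r.t. a set `S` of function symbols if it is a
non-variable term whose head symbol is not in `S`. -/
def IsAlien (S : Set F) (t : Tm F) : Prop :=
  ∃ f, t.head? = some f ∧ f ∉ S

/-- The substitution `{X/u}`. -/
def sub1 (X : ℕ) (u : Tm F) : ℕ → Tm F := fun n => if n = X then u else .var n

/-- `σ` is the substitution `{V 0/t 0, …, V (k-1)/t (k-1)}`. -/
def FiniteSub (σ : ℕ → Tm F) (V : Fin k → ℕ) (t : Fin k → Tm F) : Prop :=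
  (∀ i, σ (V i) = t i) ∧ ∀ n, (∀ i, V i ≠ n) → σ n = Tm.var n

/-- An atom: a predicate symbol applied to a list of terms. -/
structure Atom (F Pr : Type) where
  pred : Pr
  args : List (Tm F)

namespace Atom
def subst (σ : ℕ → Tm F) (A : Atom F Pr) : Atom F Pr := ⟨A.pred, A.args.map (Tm.subst σ)⟩
def vars (A : Atom F Pr) : Set ℕ := { n | ∃ t ∈ A.args, n ∈ t.vars }
def symbols (A : Atom F Pr) : Set F := { f | ∃ t ∈ A.args, f ∈ t.symbols }
def isGround (A : Atom F Pr) : Prop := A.vars = ∅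
def WFA (ar : F → ℕ) (A : Atom F Pr) : Prop := ∀ t ∈ A.args, t.WF ar
end Atom

/-- A definite clause `head ← body`. -/
structure Clause (F Pr : Type) where
  head : Atom F Pr
  body : List (Atom F Pr)

/-- A definite program: a set of definite clauses. -/
abbrev Program (F Pr : Type) := Set (Clause F Pr)

/-- A query: a conjunction (list) of atoms. -/
abbrev Query (F Pr : Type) := List (Atom F Pr)

def Clause.subst (σ : ℕ → Tm F) (C : Clause F Pr) : Clause F Pr :=
  ⟨C.head.subst σ, C.body.map (Atom.subst σ)⟩

def Clause.symbols (C : Clause F Pr) : Set F :=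
  C.head.symbols ∪ { f | ∃ A ∈ C.body, f ∈ A.symbols }

def Clause.vars (C : Clause F Pr) : Set ℕ :=
  C.head.vars ∪ { n | ∃ A ∈ C.body, n ∈ A.vars }

def Clause.WFC (ar : F → ℕ) (C : Clause F Pr) : Prop :=
  C.head.WFA ar ∧ ∀ A ∈ C.body, A.WFA ar

def progSymbols (Pg : Program F Pr) : Set F := { f | ∃ C ∈ Pg, f ∈ C.symbols }

def ProgramWF (ar : F → ℕ) (Pg : Program F Pr) : Prop := ∀ C ∈ Pg, C.WFC ar

def querySymbols (Q : Query F Pr) : Set F := { f | ∃ A ∈ Q, f ∈ A.symbols }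

def queryVars (Q : Query F Pr) : Set ℕ := { n | ∃ A ∈ Q, n ∈ A.vars }

def QueryWF (ar : F → ℕ) (Q : Query F Pr) : Prop := ∀ A ∈ Q, A.WFA ar

def substQuery (σ : ℕ → Tm F) (Q : Query F Pr) : Query F Pr := Q.map (Atom.subst σ)

/-- A first-order interpretation (for a language without equality). -/
structure Interp (F Pr : Type) where
  dom : Type
  nonempty : Nonempty dom
  fn : F → (k : ℕ) → (Fin k → dom) → dom
  rel : Pr → List dom → Prop

namespace Interp

def eval (I : Interp F Pr) (ρ : ℕ → I.dom) : Tm F → I.dom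
  | .var n => ρ n
  | .app f k ts => I.fn f k (fun i => I.eval ρ (ts i))

def holdsAtom (I : Interp F Pr) (ρ : ℕ → I.dom) (A : Atom F Pr) : Prop :=
  I.rel A.pred (A.args.map (I.eval ρ))

def holdsClause (I : Interp F Pr) (C : Clause F Pr) : Prop :=
  ∀ ρ, (∀ B ∈ C.body, I.holdsAtom ρ B) → I.holdsAtom ρ C.head

def isModel (I : Interp F Pr) (Pg : Program F Pr) : Prop := ∀ C ∈ Pg, I.holdsClause C

end Interp

/-- `P ⊨ Q`: logical consequence of the universal closure of the query. -/
def Entails (Pg : Program F Pr) (Q : Query F Pr) : Prop :=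
  ∀ I : Interp F Pr, I.isModel Pg → ∀ ρ, ∀ A ∈ Q, I.holdsAtom ρ A

/-- A substitution mapping every variable to a ground term. -/
def GroundSub (σ : ℕ → Tm F) : Prop := ∀ n, (σ n).isGround

/-- A grounding substitution by well-formed ground terms
(terms of the Herbrand universe for arities `ar`). -/
def WFGroundSub (ar : F → ℕ) (σ : ℕ → Tm F) : Prop :=
  ∀ n, (σ n).isGround ∧ (σ n).WF ar

/-- A Herbrand interpretation (set of ground atoms) that is a model of `Pg`. -/
def IsHerbrandModel (Pg : Program F Pr) (S : Set (Atom F Pr)) : Prop :=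
  ∀ C ∈ Pg, ∀ σ : ℕ → Tm F, GroundSub σ →
    (∀ B ∈ C.body, B.subst σ ∈ S) → C.head.subst σ ∈ S

/-- The least Herbrand model `M_P`. -/
def leastHerbrand (Pg : Program F Pr) : Set (Atom F Pr) :=
  ⋂₀ { S | IsHerbrandModel Pg S }

/-- `M_P ⊨ Q`: every ground instance of `Q` is true in the least Herbrand model. -/
def HoldsInM (Pg : Program F Pr) (Q : Query F Pr) : Prop :=
  ∀ σ : ℕ → Tm F, GroundSub σ → ∀ A ∈ Q, A.subst σ ∈ leastHerbrand Pg

/-- A Herbrand model over the Herbrand universe of well-formed ground terms. -/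
def IsHerbrandModelWF (ar : F → ℕ) (Pg : Program F Pr) (S : Set (Atom F Pr)) : Prop :=
  ∀ C ∈ Pg, ∀ σ : ℕ → Tm F, WFGroundSub ar σ →
    (∀ B ∈ C.body, B.subst σ ∈ S) → C.head.subst σ ∈ S

/-- The least Herbrand model `M_P` (over well-formed ground terms). -/
def leastHerbrandWF (ar : F → ℕ) (Pg : Program F Pr) : Set (Atom F Pr) :=
  ⋂₀ { S | IsHerbrandModelWF ar Pg S }

/-- `M_P ⊨ Q`, where ground instances are taken over the Herbrand universe of
well-formed ground terms. -/
def HoldsInMWF (ar : F → ℕ) (Pg : Program F Pr) (Q : Query F Pr) : Prop :=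
  ∀ σ : ℕ → Tm F, WFGroundSub ar σ → ∀ A ∈ Q, A.subst σ ∈ leastHerbrandWF ar Pg

/-- The query contains no aliens w.r.t. `S` (no subterm of it is an alien). -/
def QueryNoAliens (S : Set F) (Q : Query F Pr) : Prop :=
  ∀ A ∈ Q, ∀ t ∈ A.args, ∀ s ∈ t.subterms, ¬ IsAlien S s

/-- `Q'` is `Q` generalized for `S`: `Q'` contains no aliens w.r.t. `S` and `Q` is
obtained from `Q'` by a substitution (with domain among the variables of `Q'`)
mapping distinct variables to pairwise distinct aliens w.r.t. `S`. -/
def IsGenQuery (S : Set F) (Q' Q : Query F Pr) : Prop :=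
  QueryNoAliens S Q' ∧
  ∃ (k : ℕ) (V : Fin k → ℕ) (t : Fin k → Tm F) (σ : ℕ → Tm F),
    Function.Injective V ∧ Function.Injective t ∧ (∀ i, IsAlien S (t i)) ∧
    FiniteSub σ V t ∧ (∀ i, V i ∈ queryVars Q') ∧ Q = substQuery σ Q'

section StmtElevenAux

variable {F Pr : Type}

lemma Tm.eval_subst (I : Interp F Pr) (ρ : ℕ → I.dom) (σ : ℕ → Tm F) :
    ∀ t : Tm F, I.eval ρ (t.subst σ) = I.eval (fun n => I.eval ρ (σ n)) t
  | .var n => rfl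
  | .app f k ts => by
      simp only [Tm.subst, Interp.eval]
      congr 1
      funext i
      exact Tm.eval_subst I ρ σ (ts i)

lemma Tm.eval_congr_vars (I : Interp F Pr) (ρ₁ ρ₂ : ℕ → I.dom) :
    ∀ t : Tm F, (∀ n ∈ t.vars, ρ₁ n = ρ₂ n) → I.eval ρ₁ t = I.eval ρ₂ t
  | .var n, h => h n rfl
  | .app f k ts, h => by
      simp only [Interp.eval]
      congr 1
      funext i
      exact Tm.eval_congr_vars I ρ₁ ρ₂ (ts i)
        (fun n hn => h n (Set.mem_iUnion.2 ⟨i, hn⟩))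

lemma Tm.eval_congr_fn (I : Interp F Pr)
    (fn' : F → (k : ℕ) → (Fin k → I.dom) → I.dom) (S : Set F)
    (hagree : ∀ f ∈ S, ∀ k d, fn' f k d = I.fn f k d) (ρ : ℕ → I.dom) :
    ∀ t : Tm F, t.symbols ⊆ S →
      (Interp.mk I.dom I.nonempty fn' I.rel).eval ρ t = I.eval ρ t
  | .var n, _ => rfl
  | .app f k ts, hsub => by
      simp only [Interp.eval]
      have hf : f ∈ S := hsub (Set.mem_union_left _ rfl)
      rw [hagree f hf]
      congr 1
      funext i
      exact Tm.eval_congr_fn I fn' S hagree ρ (ts i)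
        (fun x hx => hsub (Set.mem_union_right _ (Set.mem_iUnion.2 ⟨i, hx⟩)))

lemma Tm.symbols_finite : ∀ t : Tm F, t.symbols.Finite
  | .var _ => by simp [Tm.symbols]
  | .app f k ts => by
      simp only [Tm.symbols]
      exact (Set.finite_singleton f).union
        (Set.finite_iUnion (fun i => Tm.symbols_finite (ts i)))

lemma Atom.symbols_finite (A : Atom F Pr) : A.symbols.Finite := by
  have h : A.symbols = ⋃ t ∈ A.args, t.symbols := by
    ext f; simp [Atom.symbols]
  rw [h]
  exact Set.Finite.biUnion A.args.finite_toSet (fun t _ => t.symbols_finite)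

lemma Clause.symbols_finite (C : Clause F Pr) : C.symbols.Finite := by
  have h : C.symbols = C.head.symbols ∪ ⋃ A ∈ C.body, A.symbols := by
    ext f; simp [Clause.symbols]
  rw [h]
  exact C.head.symbols_finite.union
    (Set.Finite.biUnion C.body.finite_toSet (fun A _ => A.symbols_finite))

lemma progSymbols_finite (Pg : Program F Pr) (hfin : Pg.Finite) :
    (progSymbols Pg).Finite := by
  have h : progSymbols Pg = ⋃ C ∈ Pg, C.symbols := by
    ext f; simp [progSymbols]
  rw [h]
  exact Set.Finite.biUnion hfin (fun C _ => C.symbols_finite)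

lemma querySymbols_finite (Q : Query F Pr) : (querySymbols Q).Finite := by
  have h : querySymbols Q = ⋃ A ∈ Q, A.symbols := by
    ext f; simp [querySymbols]
  rw [h]
  exact Set.Finite.biUnion Q.finite_toSet (fun A _ => A.symbols_finite)

lemma Interp.holdsAtom_subst (I : Interp F Pr) (ρ : ℕ → I.dom) (σ : ℕ → Tm F)
    (A : Atom F Pr) :
    I.holdsAtom ρ (A.subst σ) ↔ I.holdsAtom (fun n => I.eval ρ (σ n)) A := by
  have h : (A.args.map (Tm.subst σ)).map (I.eval ρ)
      = A.args.map (I.eval (fun n => I.eval ρ (σ n))) := by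
    rw [List.map_map]
    congr 1
    funext t
    exact Tm.eval_subst I ρ σ t
  simp only [Interp.holdsAtom, Atom.subst, h]

lemma leastHerbrandWF_model (ar : F → ℕ) (Pg : Program F Pr) :
    IsHerbrandModelWF ar Pg (leastHerbrandWF ar Pg) := by
  intro C hC σ hσ hbody
  refine Set.mem_sInter.2 (fun S hS => ?_)
  exact hS C hC σ hσ (fun B hB => Set.mem_sInter.1 (hbody B hB) S hS)

lemma entailed_of_mem (ar : F → ℕ) (Pg : Program F Pr) (A : Atom F Pr)
    (hA : A ∈ leastHerbrandWF ar Pg) :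
    ∀ J : Interp F Pr, J.isModel Pg → ∀ ρ, J.holdsAtom ρ A := by
  intro J hJ ρ
  have hS : IsHerbrandModelWF ar Pg {B | ∀ ρ', J.holdsAtom ρ' B} := by
    intro C hC σ hσ hbody ρ'
    have hcl := hJ C hC (fun n => J.eval ρ' (σ n))
    rw [J.holdsAtom_subst ρ' σ]
    exact hcl (fun B hB => (J.holdsAtom_subst ρ' σ B).1
      ((hbody B hB) ρ'))
  exact Set.mem_sInter.1 hA _ hS ρ

/-- The Herbrand universe interpretation. -/
noncomputable def herb (ar : F → ℕ) (Pg : Program F Pr)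
    (g : Tm F) (hg : g.isGround ∧ g.WF ar) : Interp F Pr where
  dom := {t : Tm F // t.isGround ∧ t.WF ar}
  nonempty := ⟨⟨g, hg⟩⟩
  fn := fun f k d =>
    if h : k = ar f then
      ⟨.app f k (fun i => (d i).val), by
        constructor
        · show Tm.vars _ = ∅
          simp only [Tm.vars, Set.iUnion_eq_empty]
          exact fun i => (d i).2.1
        · exact ⟨h, fun i => (d i).2.2⟩⟩
    else ⟨g, hg⟩
  rel := fun p ds => (⟨p, ds.map Subtype.val⟩ : Atom F Pr) ∈ leastHerbrandWF ar Pg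

lemma herb_eval (ar : F → ℕ) (Pg : Program F Pr) (g : Tm F)
    (hg : g.isGround ∧ g.WF ar) (ρ : ℕ → (herb ar Pg g hg).dom) :
    ∀ t : Tm F, t.WF ar →
      ((herb ar Pg g hg).eval ρ t).val = t.subst (fun n => (ρ n).val)
  | .var n, _ => rfl
  | .app f k ts, hwf => by
      obtain ⟨hk, hts⟩ := hwf
      simp only [Interp.eval, Tm.subst, herb, dif_pos hk]
      congr 1
      funext i
      exact herb_eval ar Pg g hg ρ (ts i) (hts i)

lemma herb_holdsAtom (ar : F → ℕ) (Pg : Program F Pr) (g : Tm F)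
    (hg : g.isGround ∧ g.WF ar) (ρ : ℕ → (herb ar Pg g hg).dom)
    (A : Atom F Pr) (hA : A.WFA ar) :
    (herb ar Pg g hg).holdsAtom ρ A ↔
      A.subst (fun n => (ρ n).val) ∈ leastHerbrandWF ar Pg := by
  have h : (A.args.map ((herb ar Pg g hg).eval ρ)).map Subtype.val
      = A.args.map (Tm.subst (fun n => (ρ n).val)) := by
    refine List.map_map.trans ?_
    exact List.map_congr_left (fun t ht => herb_eval ar Pg g hg ρ t (hA t ht))
  show (⟨A.pred, (A.args.map _).map Subtype.val⟩ : Atom F Pr) ∈ _ ↔ _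
  refine (Iff.of_eq (congrArg (fun l => (⟨A.pred, l⟩ : Atom F Pr) ∈ leastHerbrandWF ar Pg) h)).trans ?_
  rfl

lemma herb_isModel (ar : F → ℕ) (Pg : Program F Pr) (hPwf : ProgramWF ar Pg)
    (g : Tm F) (hg : g.isGround ∧ g.WF ar) :
    (herb ar Pg g hg).isModel Pg := by
  intro C hC ρ hbody
  have hσ : WFGroundSub ar (fun n => (ρ n).val) := fun n => (ρ n).2
  rw [herb_holdsAtom ar Pg g hg ρ C.head (hPwf C hC).1]
  exact leastHerbrandWF_model ar Pg C hC _ hσ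
    (fun B hB => (herb_holdsAtom ar Pg g hg ρ B ((hPwf C hC).2 B hB)).1
      (hbody B hB))

end StmtElevenAux

section StmtElevenAux2
variable {F Pr : Type}

lemma Interp.holdsAtom_congr_fn (I : Interp F Pr)
    (fn' : F → (k : ℕ) → (Fin k → I.dom) → I.dom) (S : Set F)
    (hagree : ∀ f ∈ S, ∀ k d, fn' f k d = I.fn f k d) (ρ : ℕ → I.dom)
    (A : Atom F Pr) (hsub : A.symbols ⊆ S) :
    (Interp.mk I.dom I.nonempty fn' I.rel).holdsAtom ρ A ↔ I.holdsAtom ρ A := by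
  have h : A.args.map ((Interp.mk I.dom I.nonempty fn' I.rel).eval ρ)
      = A.args.map (I.eval ρ) := by
    refine List.map_congr_left (fun t ht => ?_)
    exact Tm.eval_congr_fn I fn' S hagree ρ t
      (fun f hf => hsub ⟨t, ht, hf⟩)
  show I.rel _ _ ↔ I.rel _ _
  rw [h]

end StmtElevenAux2

/-- if the language has infinitely many function symbols, then for every
finite program `P` and every query `Q`, `M_P ⊨ Q` iff `P ⊨ Q`. -/
theorem stmt_11 {F Pr : Type} (ar : F → ℕ) [Infinite F]
    (Pg : Program F Pr) (hfin : Pg.Finite) (hPwf : ProgramWF ar Pg)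
    (Q : Query F Pr) (hQwf : QueryWF ar Q)
    (hHU : ∃ g : Tm F, g.isGround ∧ g.WF ar) :
    HoldsInMWF ar Pg Q ↔ Entails Pg Q := by
  obtain ⟨g, hg⟩ := hHU
  constructor
  · -- M_P ⊨ Q → P ⊨ Q
    intro hM I hI ρ A hA
    classical
    set U : Set F := progSymbols Pg ∪ querySymbols Q with hUdef
    have hUfin : U.Finite := (progSymbols_finite Pg hfin).union (querySymbols_finite Q)
    have hUcinf : (Uᶜ).Infinite := hUfin.infinite_compl
    haveI := hUcinf.to_subtype
    let e : ℕ ↪ ↥(Uᶜ) := Infinite.natEmbedding _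
    let c : ℕ → F := fun n => (e n).val
    have hcinj : Function.Injective c := fun a b h => e.injective (Subtype.val_injective h)
    have hcU : ∀ n, c n ∉ U := fun n => (e n).2
    let fn' : F → (k : ℕ) → (Fin k → I.dom) → I.dom := fun f k d =>
      if h : ∃ m, f = c m then ρ h.choose else I.fn f k d
    let I' : Interp F Pr := ⟨I.dom, I.nonempty, fn', I.rel⟩
    have hagree : ∀ f ∈ U, ∀ (k : ℕ) (d : Fin k → I.dom), fn' f k d = I.fn f k d := by
      intro f hf k d
      have hne : ¬ ∃ m, f = c m := by
        rintro ⟨m, rfl⟩; exact hcU m hf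
      simp only [fn', dif_neg hne]
    have hI' : I'.isModel Pg := by
      intro C hC ρ' hbody
      have hhead : C.head.symbols ⊆ U := fun f hf =>
        Or.inl ⟨C, hC, Or.inl hf⟩
      have hbd : ∀ B ∈ C.body, B.symbols ⊆ U := fun B hB f hf =>
        Or.inl ⟨C, hC, Or.inr ⟨B, hB, hf⟩⟩
      rw [Interp.holdsAtom_congr_fn I fn' U hagree ρ' C.head hhead]
      refine hI C hC ρ' (fun B hB => ?_)
      rw [← Interp.holdsAtom_congr_fn I fn' U hagree ρ' B (hbd B hB)]
      exact hbody B hB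
    let σ : ℕ → Tm F := fun n => Tm.app (c n) (ar (c n)) (fun _ => g)
    have hσ : WFGroundSub ar σ := by
      intro n
      constructor
      · show Tm.vars (Tm.app (c n) (ar (c n)) (fun _ => g)) = ∅
        simp only [Tm.vars, Set.iUnion_eq_empty]
        exact fun _ => hg.1
      · exact ⟨rfl, fun _ => hg.2⟩
    have hmem := hM σ hσ A hA
    have hhold := entailed_of_mem ar Pg _ hmem I' hI' ρ
    rw [Interp.holdsAtom_subst I' ρ σ A] at hhold
    have hρ : (fun n => I'.eval ρ (σ n)) = ρ := by
      funext n
      show fn' (c n) _ _ = ρ n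
      have hex : ∃ m, c n = c m := ⟨n, rfl⟩
      simp only [fn', dif_pos hex]
      exact congrArg ρ (hcinj hex.choose_spec).symm
    rw [hρ] at hhold
    have hAsub : A.symbols ⊆ U := fun f hf => Or.inr ⟨A, hA, hf⟩
    rwa [Interp.holdsAtom_congr_fn I fn' U hagree ρ A hAsub] at hhold
  · -- P ⊨ Q → M_P ⊨ Q
    intro hE σ hσ A hA
    have hH := hE (herb ar Pg g hg) (herb_isModel ar Pg hPwf g hg)
      (fun n => ⟨σ n, hσ n⟩) A hA
    replace hH := (herb_holdsAtom ar Pg g hg _ A (hQwf A hA)).1 hH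
    exact hH
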